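/- arXiv:2411.09142 — 2 statements merged into one kernel-verified Lean document; each statement's English description precedes it below -/
import Mathlib

section
/- Let P = P₁ × P₂ and Q = Q₁ × Q₂ be product probability measures on Ω₁ × Ω₂, where each pair (Pᵢ, Qᵢ) is mutually absolutely continuous. Assume that δ_{P₂|Q₂} is twice continuously differentiable on ℝ with first and second derivatives δ̇_{P₂|Q₂} and δ̈_{P₂|Q₂}, and that there exists a real q > 1 such that t ↦ e^{(q−1)t} δ_{Pᵢ|Qᵢ}(t) is integrable on ℝ for i = 1, 2. Then for every ε ∈ ℝ, δ_{P|Q}(ε) = ∫_{−∞}^{∞} δ_{P₁|Q₁}(ε − τ) · ( δ̈_{P₂|Q₂}(τ) − δ̇_{P₂|Q₂}(τ) ) dτ. -/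
open MeasureTheory

/-- The privacy profile `δ_{P|Q}(ε) := sup { P(S) − e^ε · Q(S) : S measurable }`. -/
noncomputable def privProfile {Ω : Type*} [MeasurableSpace Ω]
    (P Q : Measure Ω) (ε : ℝ) : ℝ :=
  ⨆ S : {S : Set Ω // MeasurableSet S}, ((P S.1).toReal - Real.exp ε * (Q S.1).toReal)

/-!
Let `L = log (p₂ / q₂)` be the privacy loss of the second pair and `ν` its law under `P₂`.
With densities, `δ_{P|Q}(ε) = ∫ (p - e^ε q)⁺ dμ`; factoring `p₂` out of the integrand gives
`δ_{P|Q}(ε) = ∫ δ_{P₁|Q₁}(ε - l) dν(l)` and `δ_{P₂|Q₂}(τ) = ∫ (1 - e^{τ-l})⁺ dν(l)`.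
By Tonelli the latter is `e^τ ∫_{σ > τ} e^{-σ} ν(σ, ∞) dσ`, so differentiating
`e^{-τ} δ_{P₂|Q₂}(τ)` identifies the tail `ν(τ, ∞)` with `δ_{P₂|Q₂} - δ̇_{P₂|Q₂}`:
`ν` has density `δ̈_{P₂|Q₂} - δ̇_{P₂|Q₂}`.
-/

open Set Filter Real

theorem integral_withDensity_ofReal {α : Type*} [MeasurableSpace α] {μ : Measure α} {f : α → ℝ}
    (hf : Measurable f) (hf0 : 0 ≤ f) (φ : α → ℝ) :
    ∫ x, φ x ∂μ.withDensity (fun x => ENNReal.ofReal (f x)) = ∫ x, f x * φ x ∂μ := by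
  rw [integral_withDensity_eq_integral_toReal_smul hf.ennreal_ofReal
    (ae_of_all _ fun _ => ENNReal.ofReal_lt_top)]
  simp only [ENNReal.toReal_ofReal (hf0 _), smul_eq_mul]

section Density

variable {Ω : Type*} [MeasurableSpace Ω] {μ : Measure Ω}

theorem integrable_of_isFiniteMeasure_withDensity_ofReal {f : Ω → ℝ} (hf : Measurable f)
    (hf0 : 0 ≤ f) [IsFiniteMeasure (μ.withDensity fun x => ENNReal.ofReal (f x))] :
    Integrable f μ := by
  refine ⟨hf.aestronglyMeasurable, ?_⟩
  rw [hasFiniteIntegral_iff_ofReal (ae_of_all _ hf0), ← setLIntegral_univ,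
    ← withDensity_apply _ MeasurableSet.univ]
  exact measure_lt_top _ _

theorem toReal_withDensity_ofReal_apply {f : Ω → ℝ} (hf0 : 0 ≤ f) (hfi : Integrable f μ)
    {S : Set Ω} (hS : MeasurableSet S) :
    (μ.withDensity (fun x => ENNReal.ofReal (f x)) S).toReal = ∫ x in S, f x ∂μ := by
  rw [withDensity_apply _ hS, ← ofReal_integral_eq_lintegral_ofReal hfi.restrict (ae_of_all _ hf0),
    ENNReal.toReal_ofReal (setIntegral_nonneg hS fun x _ => hf0 x)]

theorem ciSup_setIntegral_eq_integral_max_zero {h : Ω → ℝ} (hh : Measurable h)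
    (hi : Integrable h μ) :
    ⨆ S : {S : Set Ω // MeasurableSet S}, ∫ x in S.1, h x ∂μ = ∫ x, max (h x) 0 ∂μ := by
  have : Nonempty {S : Set Ω // MeasurableSet S} := ⟨⟨∅, .empty⟩⟩
  have hpos : Integrable (fun x => max (h x) 0) μ := hi.pos_part
  have hle (S : {S : Set Ω // MeasurableSet S}) : ∫ x in S.1, h x ∂μ ≤ ∫ x, max (h x) 0 ∂μ :=
    (setIntegral_mono hi.integrableOn hpos.integrableOn fun x => le_max_left _ _).trans
      (setIntegral_le_integral hpos (ae_of_all _ fun x => le_max_right _ _))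
  have hS₀ : MeasurableSet {x | 0 < h x} := measurableSet_lt measurable_const hh
  have hattain : ∫ x in {x | 0 < h x}, h x ∂μ = ∫ x, max (h x) 0 ∂μ := by
    rw [← integral_indicator hS₀]
    congr 1; ext x
    by_cases hx : 0 < h x <;> simp [indicator, hx, le_of_lt, not_lt.1]
  exact le_antisymm (ciSup_le hle)
    (hattain ▸ le_ciSup ⟨_, forall_mem_range.2 hle⟩ (⟨_, hS₀⟩ : {S : Set Ω // MeasurableSet S}))

theorem privProfile_withDensity_ofReal {f g : Ω → ℝ} (hf : Measurable f) (hg : Measurable g)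
    (hf0 : 0 ≤ f) (hg0 : 0 ≤ g) (hfi : Integrable f μ) (hgi : Integrable g μ) (ε : ℝ) :
    privProfile (μ.withDensity fun x => ENNReal.ofReal (f x))
      (μ.withDensity fun x => ENNReal.ofReal (g x)) ε
      = ∫ x, max (f x - exp ε * g x) 0 ∂μ := by
  rw [← ciSup_setIntegral_eq_integral_max_zero (h := fun x => f x - exp ε * g x)
    (hf.sub (hg.const_mul _)) (hfi.sub (hgi.const_mul _))]
  refine iSup_congr fun S => ?_
  rw [toReal_withDensity_ofReal_apply hf0 hfi S.2, toReal_withDensity_ofReal_apply hg0 hgi S.2,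
    integral_sub hfi.integrableOn (hgi.const_mul _).integrableOn, integral_const_mul]

theorem antitone_privProfile (P Q : Measure Ω) [IsFiniteMeasure P] : Antitone (privProfile P Q) :=
  fun a b hab => ciSup_mono
    ⟨P.real univ, forall_mem_range.2 fun S => (sub_le_self _ (by positivity)).trans
      (measureReal_mono (subset_univ S.1))⟩
    fun S => sub_le_sub_left
      (mul_le_mul_of_nonneg_right (exp_le_exp.2 hab) ENNReal.toReal_nonneg) _

end Density

section PrivacyLoss

variable {Ω : Type*} [MeasurableSpace Ω]

/-- Takes the junk value `0` where `g x = 0`; only `{0 < f}` matters, where `0 < g` a.e. -/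
noncomputable def privLoss (f g : Ω → ℝ) (x : Ω) : ℝ := log (f x / g x)

theorem measurable_privLoss {f g : Ω → ℝ} (hf : Measurable f) (hg : Measurable g) :
    Measurable (privLoss f g) :=
  (hf.div hg).log

theorem max_mul_sub_exp_mul_eq_mul_max {a b f g : ℝ} (τ : ℝ) (hb : 0 ≤ b) (hf : 0 ≤ f)
    (hg : 0 ≤ g) (hfg : 0 < f → 0 < g) :
    max (a * f - exp τ * (b * g)) 0 = f * max (a - exp (τ - log (f / g)) * b) 0 := by
  rcases hf.eq_or_lt with rfl | hf
  · simp only [mul_zero, zero_sub, zero_mul]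
    exact max_eq_right (neg_nonpos.2 (by positivity))
  have hexp : exp (τ - log (f / g)) = exp τ * g / f := by
    rw [exp_sub, exp_log (div_pos hf (hfg hf))]
    field_simp
  rw [hexp, mul_max_of_nonneg _ _ hf.le, mul_zero]
  congr 1
  field_simp

theorem privProfile_withDensity_eq_integral_map_privLoss {μ : Measure Ω} {f g : Ω → ℝ}
    (hf : Measurable f) (hg : Measurable g) (hf0 : 0 ≤ f) (hg0 : 0 ≤ g)
    (hfi : Integrable f μ) (hgi : Integrable g μ) (hfg : ∀ᵐ x ∂μ, 0 < f x → 0 < g x) (τ : ℝ) :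
    privProfile (μ.withDensity fun x => ENNReal.ofReal (f x))
      (μ.withDensity fun x => ENNReal.ofReal (g x)) τ
      = ∫ l, max (1 - exp (τ - l)) 0
          ∂(μ.withDensity fun x => ENNReal.ofReal (f x)).map (privLoss f g) := by
  rw [privProfile_withDensity_ofReal hf hg hf0 hg0 hfi hgi,
    integral_map (measurable_privLoss hf hg).aemeasurable (by fun_prop),
    integral_withDensity_ofReal hf hf0]
  refine integral_congr_ae ?_
  filter_upwards [hfg] with x hx
  simpa [privLoss] using max_mul_sub_exp_mul_eq_mul_max (a := 1) τ zero_le_one (hf0 x) (hg0 x) hx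

end PrivacyLoss

section Product

variable {Ω₁ Ω₂ : Type*} [MeasurableSpace Ω₁] [MeasurableSpace Ω₂]
  {μ₁ : Measure Ω₁} {μ₂ : Measure Ω₂} [SFinite μ₂]

theorem prod_withDensity_ofReal {f₁ : Ω₁ → ℝ} {f₂ : Ω₂ → ℝ} (hf₁ : Measurable f₁)
    (hf₂ : Measurable f₂) (hf₁0 : 0 ≤ f₁) :
    (μ₁.withDensity fun x => ENNReal.ofReal (f₁ x)).prod
        (μ₂.withDensity fun y => ENNReal.ofReal (f₂ y))
      = (μ₁.prod μ₂).withDensity fun z => ENNReal.ofReal (f₁ z.1 * f₂ z.2) := by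
  simp_rw [prod_withDensity hf₁.ennreal_ofReal hf₂.ennreal_ofReal, ENNReal.ofReal_mul (hf₁0 _)]

theorem privProfile_prod_withDensity_eq_integral_map_privLoss [SFinite μ₁]
    {f₁ g₁ : Ω₁ → ℝ} {f₂ g₂ : Ω₂ → ℝ}
    (hf₁ : Measurable f₁) (hg₁ : Measurable g₁) (hf₂ : Measurable f₂) (hg₂ : Measurable g₂)
    (hf₁0 : 0 ≤ f₁) (hg₁0 : 0 ≤ g₁) (hf₂0 : 0 ≤ f₂) (hg₂0 : 0 ≤ g₂)
    (hf₁i : Integrable f₁ μ₁) (hg₁i : Integrable g₁ μ₁) (hf₂i : Integrable f₂ μ₂)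
    (hg₂i : Integrable g₂ μ₂) (hfg₂ : ∀ᵐ y ∂μ₂, 0 < f₂ y → 0 < g₂ y) (ε : ℝ) :
    privProfile
        ((μ₁.withDensity fun x => ENNReal.ofReal (f₁ x)).prod
          (μ₂.withDensity fun y => ENNReal.ofReal (f₂ y)))
        ((μ₁.withDensity fun x => ENNReal.ofReal (g₁ x)).prod
          (μ₂.withDensity fun y => ENNReal.ofReal (g₂ y))) ε
      = ∫ l, privProfile (μ₁.withDensity fun x => ENNReal.ofReal (f₁ x))
          (μ₁.withDensity fun x => ENNReal.ofReal (g₁ x)) (ε - l)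
          ∂(μ₂.withDensity fun y => ENNReal.ofReal (f₂ y)).map (privLoss f₂ g₂) := by
  have : IsFiniteMeasure (μ₁.withDensity fun x => ENNReal.ofReal (f₁ x)) :=
    isFiniteMeasure_withDensity_ofReal hf₁i.2
  have hprofile : Measurable fun l => privProfile (μ₁.withDensity fun x => ENNReal.ofReal (f₁ x))
      (μ₁.withDensity fun x => ENNReal.ofReal (g₁ x)) (ε - l) :=
    (antitone_privProfile _ _).measurable.comp (measurable_const.sub measurable_id)
  have hfi := hf₁i.mul_prod hf₂i
  have hgi := hg₁i.mul_prod hg₂i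
  have hmax : Integrable (fun z : Ω₁ × Ω₂ => max (f₁ z.1 * f₂ z.2 - exp ε * (g₁ z.1 * g₂ z.2)) 0)
      (μ₁.prod μ₂) := (hfi.sub (hgi.const_mul _)).pos_part
  rw [prod_withDensity_ofReal hf₁ hf₂ hf₁0, prod_withDensity_ofReal hg₁ hg₂ hg₁0,
    privProfile_withDensity_ofReal (f := fun z : Ω₁ × Ω₂ => f₁ z.1 * f₂ z.2)
      (g := fun z : Ω₁ × Ω₂ => g₁ z.1 * g₂ z.2)
      ((hf₁.comp measurable_fst).mul (hf₂.comp measurable_snd))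
      ((hg₁.comp measurable_fst).mul (hg₂.comp measurable_snd))
      (fun z => mul_nonneg (hf₁0 _) (hf₂0 _)) (fun z => mul_nonneg (hg₁0 _) (hg₂0 _)) hfi hgi,
    integral_prod_symm _ hmax,
    integral_map (measurable_privLoss hf₂ hg₂).aemeasurable hprofile.aestronglyMeasurable,
    integral_withDensity_ofReal hf₂ hf₂0]
  refine integral_congr_ae ?_
  filter_upwards [hfg₂] with y hy
  rw [privProfile_withDensity_ofReal hf₁ hg₁ hf₁0 hg₁0 hf₁i hg₁i, ← integral_const_mul]
  congr 1; ext x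
  exact max_mul_sub_exp_mul_eq_mul_max ε (hg₁0 x) (hf₂0 y) (hg₂0 y) hy

end Product

section RealLine

theorem antitone_measureReal_Ioi (ν : Measure ℝ) [IsFiniteMeasure ν] :
    Antitone fun σ => ν.real (Ioi σ) :=
  fun _ _ h => measureReal_mono (Ioi_subset_Ioi h)

theorem Antitone.deriv_eq_of_sub_eq_intervalIntegral {F g : ℝ → ℝ} (hg : Antitone g)
    (hF : ∀ a b, F b - F a = ∫ u in a..b, g u) {x : ℝ} (hx : DifferentiableAt ℝ F x) :
    deriv F x = g x := by
  have hgap : ∀ y, F y - g x * y - (F x - g x * x) = ∫ u in x..y, (g u - g x) := fun y => by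
    rw [intervalIntegral.integral_sub hg.intervalIntegrable intervalIntegrable_const,
      intervalIntegral.integral_const, ← hF, smul_eq_mul]
    ring
  -- Fermat's rule: `y ↦ F y - g x * y` peaks at `x`; no continuity of `g` is needed.
  have hmax : IsMaxOn (fun y => F y - g x * y) univ x := fun y _ => by
    suffices ∫ u in x..y, (g u - g x) ≤ 0 by simp only [mem_ofPred_eq]; linarith [hgap y]
    rcases le_total x y with hxy | hyx
    · simpa using intervalIntegral.integral_mono_on hxy
        (hg.intervalIntegrable.sub intervalIntegrable_const) (intervalIntegrable_const (c := 0))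
        fun u hu => sub_nonpos.2 (hg hu.1)
    · rw [intervalIntegral.integral_symm, neg_nonpos]
      exact intervalIntegral.integral_nonneg hyx fun u hu => sub_nonneg.2 (hg hu.2)
  have hderiv : HasDerivAt (fun y => F y - g x * y) (deriv F x - g x) x := by
    simpa using hx.hasDerivAt.fun_sub ((hasDerivAt_id' x).const_mul (g x))
  linarith [hderiv.deriv.symm.trans (hmax.isLocalMax univ_mem).deriv_eq_zero]

theorem lintegral_Ioi_indicator_Iio_exp_neg (τ l : ℝ) :
    ∫⁻ σ in Ioi τ, (Iio l).indicator (fun σ => ENNReal.ofReal (exp (-σ))) σ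
      = ENNReal.ofReal (exp (-τ) - exp (-l)) := by
  rw [lintegral_indicator measurableSet_Iio, Measure.restrict_restrict measurableSet_Iio,
    Iio_inter_Ioi]
  rcases le_total l τ with hlτ | hτl
  · rw [Ioo_eq_empty (not_lt.2 hlτ), Measure.restrict_empty, lintegral_zero_measure,
      ENNReal.ofReal_of_nonpos (by simpa using hlτ)]
  · rw [← ofReal_integral_eq_lintegral_ofReal ((by fun_prop : Continuous fun σ => exp (-σ))
        |>.integrableOn_Icc.mono_set Ioo_subset_Icc_self) (ae_of_all _ fun σ => (exp_pos _).le),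
      integral_Ioc_eq_integral_Ioo.symm, ← intervalIntegral.integral_of_le hτl]
    simp [intervalIntegral.integral_comp_neg]

theorem integral_max_exp_neg_sub_exp_neg (ν : Measure ℝ) [IsFiniteMeasure ν] (τ : ℝ) :
    ∫ l, max (exp (-τ) - exp (-l)) 0 ∂ν = ∫ σ in Ioi τ, exp (-σ) * ν.real (Ioi σ) := by
  rw [integral_eq_lintegral_of_nonneg_ae (f := fun l => max (exp (-τ) - exp (-l)) 0)
      (ae_of_all _ fun l => le_max_right _ _)
      (by fun_prop : Continuous fun l => max (exp (-τ) - exp (-l)) 0).aestronglyMeasurable,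
    integral_eq_lintegral_of_nonneg_ae (f := fun σ => exp (-σ) * ν.real (Ioi σ))
      (ae_of_all _ fun σ => by positivity)
      ((by fun_prop : Measurable fun σ => exp (-σ)).mul
        (antitone_measureReal_Ioi ν).measurable).aestronglyMeasurable]
  congr 1
  have hkernel : Measurable fun p : ℝ × ℝ =>
      (Iio p.1).indicator (fun σ => ENNReal.ofReal (exp (-σ))) p.2 :=
    (by fun_prop : Measurable fun p : ℝ × ℝ => ENNReal.ofReal (exp (-p.2))).indicator
      (measurableSet_lt measurable_snd measurable_fst)
  calc ∫⁻ l, ENNReal.ofReal (max (exp (-τ) - exp (-l)) 0) ∂ν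
      = ∫⁻ l, (∫⁻ σ in Ioi τ, (Iio l).indicator (fun σ => ENNReal.ofReal (exp (-σ))) σ) ∂ν := by
        simp_rw [lintegral_Ioi_indicator_Iio_exp_neg, ENNReal.ofReal_max, ENNReal.ofReal_zero,
          max_zero]
    _ = ∫⁻ σ in Ioi τ, ∫⁻ l, (Iio l).indicator (fun σ => ENNReal.ofReal (exp (-σ))) σ ∂ν :=
        lintegral_lintegral_swap (f := fun l σ => (Iio l).indicator
          (fun σ => ENNReal.ofReal (exp (-σ))) σ) hkernel.aemeasurable
    _ = ∫⁻ σ in Ioi τ, ENNReal.ofReal (exp (-σ) * ν.real (Ioi σ)) := lintegral_congr fun σ => by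
        have : (fun l => (Iio l).indicator (fun σ => ENNReal.ofReal (exp (-σ))) σ)
            = (Ioi σ).indicator fun _ => ENNReal.ofReal (exp (-σ)) := by
          ext l; simp [indicator]
        rw [this, lintegral_indicator_const measurableSet_Ioi, ENNReal.ofReal_mul (exp_pos _).le,
          ofReal_measureReal]

theorem measureReal_Ioi_eq_sub_deriv (ν : Measure ℝ) [IsFiniteMeasure ν] {D : ℝ → ℝ}
    (hD : Differentiable ℝ D) (hrep : ∀ τ, D τ = ∫ l, max (1 - exp (τ - l)) 0 ∂ν) (τ : ℝ) :
    ν.real (Ioi τ) = D τ - deriv D τ := by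
  set h : ℝ → ℝ := fun σ => exp (-σ) * ν.real (Ioi σ)
  have h_anti : Antitone h := fun a b hab =>
    mul_le_mul (exp_le_exp.2 (neg_le_neg hab)) (antitone_measureReal_Ioi ν hab)
      measureReal_nonneg (exp_pos _).le
  have h_int : ∀ a, IntegrableOn h (Ioi a) := fun a => by
    refine Integrable.mono' ((integrableOn_exp_neg_Ioi a).mul_const (ν.real univ))
      h_anti.measurable.aestronglyMeasurable (ae_of_all _ fun σ => ?_)
    rw [Real.norm_of_nonneg (by positivity)]
    exact mul_le_mul_of_nonneg_left (measureReal_mono (subset_univ _)) (exp_pos _).le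
  have h_tail : ∀ τ, exp (-τ) * D τ = ∫ σ in Ioi τ, h σ := fun τ => by
    rw [hrep, ← integral_const_mul, ← integral_max_exp_neg_sub_exp_neg]
    congr 1; ext l
    rw [mul_max_of_nonneg _ _ (exp_pos _).le, mul_sub, mul_one, ← exp_add, mul_zero,
      show -τ + (τ - l) = -l by ring]
  have h_deriv : HasDerivAt (fun τ => -(exp (-τ) * D τ))
      (exp (-τ) * D τ - exp (-τ) * deriv D τ) τ :=
    ((hasDerivAt_neg τ).exp.fun_mul (hD τ).hasDerivAt).fun_neg.congr_deriv (by ring)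
  have := h_anti.deriv_eq_of_sub_eq_intervalIntegral (fun a b => by
      rw [h_tail, h_tail, ← intervalIntegral.integral_Ioi_sub_Ioi' (h_int a) (h_int b)]; ring)
    h_deriv.differentiableAt
  rw [h_deriv.deriv, ← mul_sub] at this
  exact (mul_left_cancel₀ (exp_pos _).ne' this).symm

theorem eq_withDensity_of_measureReal_Ioi (ν : Measure ℝ) [IsFiniteMeasure ν]
    {W : ℝ → ℝ} (hW : ∀ τ, ν.real (Ioi τ) = W τ) (hWd : Differentiable ℝ W)
    (hW' : Continuous (deriv W)) :
    ν = volume.withDensity fun τ => ENNReal.ofReal (-deriv W τ) := by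
  have hW_anti : Antitone W := funext hW ▸ antitone_measureReal_Ioi ν
  refine Measure.ext_of_Ioc' ν _ (fun a b _ => measure_ne_top ν _) fun a b hab => ?_
  have hIoc : ν.real (Ioc a b) = W a - W b := by
    rw [← Ioi_sdiff_Ioi, measureReal_sdiff (Ioi_subset_Ioi hab.le) measurableSet_Ioi, hW, hW]
  rw [← ofReal_measureReal, hIoc, withDensity_apply _ measurableSet_Ioc,
    ← ofReal_integral_eq_lintegral_ofReal (f := fun τ => -deriv W τ) hW'.neg.integrableOn_Ioc
      (ae_of_all _ fun τ => neg_nonneg.2 hW_anti.deriv_nonpos),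
    ← intervalIntegral.integral_of_le hab.le, intervalIntegral.integral_neg,
    intervalIntegral.integral_deriv_eq_sub (fun x _ => hWd x) (hW'.intervalIntegrable a b), neg_sub]

theorem integral_eq_integral_mul_of_integral_max_one_sub_exp (ν : Measure ℝ) [IsFiniteMeasure ν]
    {D : ℝ → ℝ} (hD : ContDiff ℝ 2 D) (hrep : ∀ τ, D τ = ∫ l, max (1 - exp (τ - l)) 0 ∂ν)
    (φ : ℝ → ℝ) :
    ∫ l, φ l ∂ν = ∫ τ, φ τ * (deriv (deriv D) τ - deriv D τ) := by
  obtain ⟨hD₁, -, hD'⟩ := (contDiff_succ_iff_deriv (n := 1)).1 hD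
  have hWd : Differentiable ℝ fun τ => D τ - deriv D τ := hD₁.sub (hD'.differentiable one_ne_zero)
  have hW' : deriv (fun τ => D τ - deriv D τ) = fun τ => deriv D τ - deriv (deriv D) τ :=
    funext fun τ => deriv_sub (hD₁ τ) (hD'.differentiable one_ne_zero τ)
  have hT := measureReal_Ioi_eq_sub_deriv ν hD₁ hrep
  have hdens_nonneg : 0 ≤ fun τ => deriv (deriv D) τ - deriv D τ := fun τ => by
    simpa [hW'] using (funext hT ▸ antitone_measureReal_Ioi ν :
      Antitone fun τ => D τ - deriv D τ).deriv_nonpos (x := τ)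
  have hD'_cont : Continuous (deriv D) := hD.continuous_deriv (by norm_num)
  have hD''_cont : Continuous (deriv (deriv D)) := hD'.continuous_deriv le_rfl
  rw [eq_withDensity_of_measureReal_Ioi ν hT hWd (hW' ▸ hD'_cont.sub hD''_cont)]
  simp only [hW', neg_sub]
  rw [integral_withDensity_ofReal (f := fun τ => deriv (deriv D) τ - deriv D τ)
    (hD''_cont.sub hD'_cont).measurable hdens_nonneg]
  simp_rw [mul_comm]

end RealLine

theorem compose_privacy_profiles_general
    {Ω₁ Ω₂ : Type*} [MeasurableSpace Ω₁] [MeasurableSpace Ω₂]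
    (μ₁ : Measure Ω₁) [SigmaFinite μ₁] (μ₂ : Measure Ω₂) [SigmaFinite μ₂]
    (P₁ Q₁ : Measure Ω₁) [IsProbabilityMeasure P₁] [IsProbabilityMeasure Q₁]
    (P₂ Q₂ : Measure Ω₂) [IsProbabilityMeasure P₂] [IsProbabilityMeasure Q₂]
    (f₁ g₁ : Ω₁ → ℝ) (f₂ g₂ : Ω₂ → ℝ)
    (hf₁ : Measurable f₁) (hg₁ : Measurable g₁)
    (hf₂ : Measurable f₂) (hg₂ : Measurable g₂)
    (hf₁0 : 0 ≤ f₁) (hg₁0 : 0 ≤ g₁) (hf₂0 : 0 ≤ f₂) (hg₂0 : 0 ≤ g₂)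
    (hP₁ : P₁ = μ₁.withDensity (fun θ => ENNReal.ofReal (f₁ θ)))
    (hQ₁ : Q₁ = μ₁.withDensity (fun θ => ENNReal.ofReal (g₁ θ)))
    (hP₂ : P₂ = μ₂.withDensity (fun θ => ENNReal.ofReal (f₂ θ)))
    (hQ₂ : Q₂ = μ₂.withDensity (fun θ => ENNReal.ofReal (g₂ θ)))
    (hac₂ : ∀ᵐ θ ∂μ₂, (0 < f₂ θ ↔ 0 < g₂ θ))
    (hsmooth : ContDiff ℝ 2 (privProfile P₂ Q₂))
    (ε : ℝ) :
    privProfile (P₁.prod P₂) (Q₁.prod Q₂) ε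
      = ∫ τ : ℝ, privProfile P₁ Q₁ (ε - τ) *
          (deriv (deriv (privProfile P₂ Q₂)) τ - deriv (privProfile P₂ Q₂) τ) := by
  subst hP₁ hQ₁ hP₂ hQ₂
  have hf₁i := integrable_of_isFiniteMeasure_withDensity_ofReal (μ := μ₁) hf₁ hf₁0
  have hg₁i := integrable_of_isFiniteMeasure_withDensity_ofReal (μ := μ₁) hg₁ hg₁0
  have hf₂i := integrable_of_isFiniteMeasure_withDensity_ofReal (μ := μ₂) hf₂ hf₂0
  have hg₂i := integrable_of_isFiniteMeasure_withDensity_ofReal (μ := μ₂) hg₂ hg₂0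
  have hfg₂ : ∀ᵐ y ∂μ₂, 0 < f₂ y → 0 < g₂ y := hac₂.mono fun _ h => h.1
  rw [privProfile_prod_withDensity_eq_integral_map_privLoss hf₁ hg₁ hf₂ hg₂ hf₁0 hg₁0 hf₂0 hg₂0
      hf₁i hg₁i hf₂i hg₂i hfg₂,
    integral_eq_integral_mul_of_integral_max_one_sub_exp _ hsmooth
      (privProfile_withDensity_eq_integral_map_privLoss hf₂ hg₂ hf₂0 hg₂0 hf₂i hg₂i hfg₂)]

theorem compose_privacy_profiles
    {Ω₁ Ω₂ : Type*} [MeasurableSpace Ω₁] [MeasurableSpace Ω₂]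
    (μ₁ : Measure Ω₁) [SigmaFinite μ₁] (μ₂ : Measure Ω₂) [SigmaFinite μ₂]
    (P₁ Q₁ : Measure Ω₁) [IsProbabilityMeasure P₁] [IsProbabilityMeasure Q₁]
    (P₂ Q₂ : Measure Ω₂) [IsProbabilityMeasure P₂] [IsProbabilityMeasure Q₂]
    (f₁ g₁ : Ω₁ → ℝ) (f₂ g₂ : Ω₂ → ℝ)
    (hf₁ : Measurable f₁) (hg₁ : Measurable g₁)
    (hf₂ : Measurable f₂) (hg₂ : Measurable g₂)
    (hf₁0 : 0 ≤ f₁) (hg₁0 : 0 ≤ g₁) (hf₂0 : 0 ≤ f₂) (hg₂0 : 0 ≤ g₂)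
    (hP₁ : P₁ = μ₁.withDensity (fun θ => ENNReal.ofReal (f₁ θ)))
    (hQ₁ : Q₁ = μ₁.withDensity (fun θ => ENNReal.ofReal (g₁ θ)))
    (hP₂ : P₂ = μ₂.withDensity (fun θ => ENNReal.ofReal (f₂ θ)))
    (hQ₂ : Q₂ = μ₂.withDensity (fun θ => ENNReal.ofReal (g₂ θ)))
    (hac₁ : ∀ᵐ θ ∂μ₁, (0 < f₁ θ ↔ 0 < g₁ θ))
    (hac₂ : ∀ᵐ θ ∂μ₂, (0 < f₂ θ ↔ 0 < g₂ θ))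
    (hsmooth : ContDiff ℝ 2 (privProfile P₂ Q₂))
    (hint : ∃ r : ℝ, 1 < r ∧
      Integrable (fun t => Real.exp ((r - 1) * t) * privProfile P₁ Q₁ t) ∧
      Integrable (fun t => Real.exp ((r - 1) * t) * privProfile P₂ Q₂ t))
    (ε : ℝ) :
    privProfile (P₁.prod P₂) (Q₁.prod Q₂) ε
      = ∫ τ : ℝ, privProfile P₁ Q₁ (ε - τ) *
          (deriv (deriv (privProfile P₂ Q₂)) τ - deriv (privProfile P₂ Q₂) τ) :=
  compose_privacy_profiles_general μ₁ μ₂ P₁ Q₁ P₂ Q₂ f₁ g₁ f₂ g₂ hf₁ hg₁ hf₂ hg₂ hf₁0 hg₁0 hf₂0 hg₂0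
    hP₁ hQ₁ hP₂ hQ₂ hac₂ hsmooth ε
end

section
/- Let P₁, Q₁ be probability measures on Ω₁, let x ↦ P₂^x and x ↦ Q₂^x be Markov kernels from Ω₁ to Ω₂, and let P and Q be the joint measures on Ω₁ × Ω₂ with P(A) = ∫∫ 1_A(x,y) P₂^x(dy) P₁(dx) and Q(A) = ∫∫ 1_A(x,y) Q₂^x(dy) Q₁(dx). If there exist probability measures P₂, Q₂ on Ω₂ such that δ_{P₂^x|Q₂^x}(ε) ≤ δ_{P₂|Q₂}(ε) for all ε ∈ ℝ and all x ∈ Ω₁, then δ_{P|Q}(ε) ≤ δ_{P₁×P₂ | Q₁×Q₂}(ε) for all ε ∈ ℝ. -/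
/-!
Let `c = e^ε` and let `p₁, q₁` be the densities of `P₁, Q₁` with respect to `P₁ + Q₁`. Then
`P(S) - c Q(S) = ∫ (p₁(x) P₂^x(Sₓ) - c q₁(x) Q₂^x(Sₓ))`, so it suffices to bound each slice.
For a slice pair `(μ, ν) = (P₂^x, Q₂^x)` and weights `a, b > 0`,
`a μ(A) - b ν(A) = a (μ(A) - e^{ε'} ν(A))` with `ε' = log (b / a)`, so the hypothesis bounds it by
`a δ_{P₂|Q₂}(ε')`, and by the Neyman–Pearson lemma this supremum is attained at the
likelihood-ratio set `{b q₂ < a p₂}`. Choosing `T` whose slice over `x` is the likelihood-ratio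
set for the weights `(p₁(x), c q₁(x))` and integrating back over `x` gives
`P(S) - c Q(S) ≤ (P₁ × P₂)(T) - c (Q₁ × Q₂)(T) ≤ δ_{P₁×P₂|Q₁×Q₂}(ε)`.
-/

open MeasureTheory ProbabilityTheory
open scoped ENNReal

lemma ENNReal.add_le_add_iff_toReal_sub_le {x y z w : ℝ≥0∞}
    (hx : x ≠ ∞) (hy : y ≠ ∞) (hz : z ≠ ∞) (hw : w ≠ ∞) :
    x + y ≤ z + w ↔ x.toReal - w.toReal ≤ z.toReal - y.toReal := by
  rw [← ENNReal.toReal_le_toReal (by finiteness) (by finiteness), ENNReal.toReal_add hx hy,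
    ENNReal.toReal_add hz hw]
  constructor <;> intro h <;> linarith

section PrivProfile

variable {Ω : Type*} [MeasurableSpace Ω]

lemma le_privProfile (P Q : Measure Ω) [IsProbabilityMeasure P] (ε : ℝ) {S : Set Ω}
    (hS : MeasurableSet S) :
    P.real S - Real.exp ε * Q.real S ≤ privProfile P Q ε := by
  refine le_ciSup (f := fun S : {S : Set Ω // MeasurableSet S} =>
    P.real S.1 - Real.exp ε * Q.real S.1) ⟨1, ?_⟩ ⟨S, hS⟩
  rintro _ ⟨T, rfl⟩
  have : 0 ≤ Real.exp ε * Q.real T.1 := by positivity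
  linarith [measureReal_le_one (μ := P) (s := T.1)]

lemma privProfile_le (P Q : Measure Ω) (ε : ℝ) {r : ℝ}
    (h : ∀ S, MeasurableSet S → P.real S - Real.exp ε * Q.real S ≤ r) :
    privProfile P Q ε ≤ r :=
  haveI : Nonempty {S : Set Ω // MeasurableSet S} := ⟨⟨∅, .empty⟩⟩
  ciSup_le fun S => h S.1 S.2

end PrivProfile

section NeymanPearson

variable {Ω : Type*} [MeasurableSpace Ω]

lemma setLIntegral_add_setLIntegral_lt_le {ν : Measure Ω} {f g : Ω → ℝ≥0∞}
    (hf : Measurable f) (hg : Measurable g) {A : Set Ω} (hA : MeasurableSet A) :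
    ∫⁻ y in A, f y ∂ν + ∫⁻ y in {y | g y < f y}, g y ∂ν
      ≤ ∫⁻ y in {y | g y < f y}, f y ∂ν + ∫⁻ y in A, g y ∂ν := by
  have hA' : MeasurableSet {y | g y < f y} := measurableSet_lt hg hf
  simp only [← lintegral_indicator hA, ← lintegral_indicator hA']
  rw [← lintegral_add_left (hf.indicator hA), ← lintegral_add_left (hf.indicator hA')]
  refine lintegral_mono fun y => ?_
  by_cases hyA : y ∈ A <;> by_cases hyA' : y ∈ {y | g y < f y} <;>
    simp_all [Set.indicator_of_mem, Set.indicator_of_notMem, le_of_lt]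

/-- The Neyman–Pearson (likelihood-ratio) set of the weights `a`, `b`. -/
def npSet (P Q : Measure Ω) (a b : ℝ≥0∞) : Set Ω :=
  {y | b * Q.rnDeriv (P + Q) y < a * P.rnDeriv (P + Q) y}

variable (P Q : Measure Ω)

lemma measurableSet_npSet (a b : ℝ≥0∞) : MeasurableSet (npSet P Q a b) :=
  measurableSet_lt (by fun_prop) (by fun_prop)

lemma measurableSet_setOf_mem_npSet {α : Type*} [MeasurableSpace α] {a b : α → ℝ≥0∞}
    (ha : Measurable a) (hb : Measurable b) :
    MeasurableSet {z : α × Ω | z.2 ∈ npSet P Q (a z.1) (b z.1)} :=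
  measurableSet_lt (f := fun z : α × Ω => b z.1 * Q.rnDeriv (P + Q) z.2)
    (g := fun z : α × Ω => a z.1 * P.rnDeriv (P + Q) z.2) (by fun_prop) (by fun_prop)

variable [SigmaFinite P] [SigmaFinite Q]

lemma add_measure_npSet_le (a b : ℝ≥0∞) {T : Set Ω} (hT : MeasurableSet T) :
    a * P T + b * Q (npSet P Q a b) ≤ a * P (npSet P Q a b) + b * Q T := by
  have hP : P ≪ P + Q := Measure.absolutelyContinuous_of_le (Measure.le_add_right le_rfl)
  have hQ : Q ≪ P + Q := Measure.absolutelyContinuous_of_le (Measure.le_add_left le_rfl)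
  simp only [← Measure.setLIntegral_rnDeriv hP, ← Measure.setLIntegral_rnDeriv hQ,
    ← lintegral_const_mul _ (Measure.measurable_rnDeriv _ _)]
  exact setLIntegral_add_setLIntegral_lt_le ((Measure.measurable_rnDeriv _ _).const_mul a)
    ((Measure.measurable_rnDeriv _ _).const_mul b) hT

variable [IsFiniteMeasure P] [IsFiniteMeasure Q]

lemma mul_measureReal_sub_le_npSet {a b : ℝ≥0∞} (ha : a ≠ ∞) (hb : b ≠ ∞) {T : Set Ω}
    (hT : MeasurableSet T) :
    a.toReal * P.real T - b.toReal * Q.real T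
      ≤ a.toReal * P.real (npSet P Q a b) - b.toReal * Q.real (npSet P Q a b) := by
  have h := add_measure_npSet_le P Q a b hT
  rw [ENNReal.add_le_add_iff_toReal_sub_le (by finiteness) (by finiteness) (by finiteness)
    (by finiteness)] at h
  simpa only [ENNReal.toReal_mul, measureReal_def] using h

lemma privProfile_le_npSet (ε : ℝ) :
    privProfile P Q ε ≤ P.real (npSet P Q 1 (ENNReal.ofReal (Real.exp ε)))
      - Real.exp ε * Q.real (npSet P Q 1 (ENNReal.ofReal (Real.exp ε))) :=
  privProfile_le P Q ε fun T hT => by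
    simpa [(Real.exp_pos ε).le] using
      mul_measureReal_sub_le_npSet P Q ENNReal.one_ne_top
        (ENNReal.ofReal_ne_top (r := Real.exp ε)) hT

end NeymanPearson

section Domination

variable {Ω : Type*} [MeasurableSpace Ω] {μ ν P Q : Measure Ω}

lemma exists_mul_measureReal_sub_le_of_privProfile_le [IsProbabilityMeasure μ]
    [IsProbabilityMeasure P] [IsFiniteMeasure Q]
    (hdom : ∀ ε, privProfile μ ν ε ≤ privProfile P Q ε) (a b : ℝ) (ha : 0 ≤ a) (hb : 0 ≤ b)
    {S : Set Ω} (hS : MeasurableSet S) :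
    ∃ T, MeasurableSet T ∧ a * μ.real S - b * ν.real S ≤ a * P.real T - b * Q.real T := by
  rcases ha.eq_or_lt with rfl | ha
  · refine ⟨∅, .empty, ?_⟩
    simp only [zero_mul, zero_sub, measureReal_empty, mul_zero, sub_self, Left.neg_nonpos_iff]
    positivity
  rcases hb.eq_or_lt with rfl | hb
  · exact ⟨.univ, .univ, by simpa using mul_le_of_le_one_right ha.le measureReal_le_one⟩
  set ε := Real.log (b / a)
  have hexp : Real.exp ε = b / a := Real.exp_log (div_pos hb ha)
  refine ⟨_, measurableSet_npSet P Q 1 (ENNReal.ofReal (Real.exp ε)), ?_⟩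
  calc a * μ.real S - b * ν.real S = a * (μ.real S - Real.exp ε * ν.real S) := by
        rw [hexp]; field_simp
    _ ≤ a * privProfile μ ν ε := by gcongr; exact le_privProfile μ ν ε hS
    _ ≤ a * privProfile P Q ε := by gcongr; exact hdom ε
    _ ≤ a * (P.real (npSet P Q 1 (ENNReal.ofReal (Real.exp ε)))
          - Real.exp ε * Q.real (npSet P Q 1 (ENNReal.ofReal (Real.exp ε)))) := by
        gcongr; exact privProfile_le_npSet P Q ε
    _ = _ := by rw [hexp]; field_simp

lemma add_measure_npSet_le_of_privProfile_le [IsProbabilityMeasure μ] [IsFiniteMeasure ν]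
    [IsProbabilityMeasure P] [IsFiniteMeasure Q]
    (hdom : ∀ ε, privProfile μ ν ε ≤ privProfile P Q ε) {a b : ℝ≥0∞} (ha : a ≠ ∞) (hb : b ≠ ∞)
    {S : Set Ω} (hS : MeasurableSet S) :
    a * μ S + b * Q (npSet P Q a b) ≤ a * P (npSet P Q a b) + b * ν S := by
  obtain ⟨T, hT, hST⟩ := exists_mul_measureReal_sub_le_of_privProfile_le hdom
    a.toReal b.toReal ENNReal.toReal_nonneg ENNReal.toReal_nonneg hS
  rw [ENNReal.add_le_add_iff_toReal_sub_le (by finiteness) (by finiteness) (by finiteness)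
    (by finiteness)]
  simpa only [ENNReal.toReal_mul, measureReal_def] using
    hST.trans (mul_measureReal_sub_le_npSet P Q ha hb hT)

end Domination

section Integration

variable {α β : Type*} [MeasurableSpace α] [MeasurableSpace β] {μ ν ρ : Measure α}

lemma compProd_apply_eq_lintegral_rnDeriv_mul [SFinite μ] [μ.HaveLebesgueDecomposition ρ]
    (hμ : μ ≪ ρ) (κ : Kernel α β) [IsSFiniteKernel κ] {S : Set (α × β)} (hS : MeasurableSet S) :
    (μ ⊗ₘ κ) S = ∫⁻ x, μ.rnDeriv ρ x * κ x (Prod.mk x ⁻¹' S) ∂ρ := by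
  rw [Measure.compProd_apply hS,
    lintegral_rnDeriv_mul hμ (Kernel.measurable_kernel_prodMk_left hS).aemeasurable]

lemma compProd_add_mul_compProd_le_of_ae [SFinite μ] [SFinite ν]
    [μ.HaveLebesgueDecomposition ρ] [ν.HaveLebesgueDecomposition ρ] (hμ : μ ≪ ρ) (hν : ν ≪ ρ)
    {κμ κν ημ ην : Kernel α β} [IsSFiniteKernel κμ] [IsSFiniteKernel κν] [IsSFiniteKernel ημ]
    [IsSFiniteKernel ην] (c : ℝ≥0∞) {S T : Set (α × β)} (hS : MeasurableSet S)
    (hT : MeasurableSet T)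
    (h : ∀ᵐ x ∂ρ, μ.rnDeriv ρ x * κμ x (Prod.mk x ⁻¹' S)
        + c * ν.rnDeriv ρ x * ην x (Prod.mk x ⁻¹' T)
      ≤ μ.rnDeriv ρ x * ημ x (Prod.mk x ⁻¹' T) + c * ν.rnDeriv ρ x * κν x (Prod.mk x ⁻¹' S)) :
    (μ ⊗ₘ κμ) S + c * (ν ⊗ₘ ην) T ≤ (μ ⊗ₘ ημ) T + c * (ν ⊗ₘ κν) S := by
  have hmeas : ∀ (m : Measure α) (η : Kernel α β) [IsSFiniteKernel η] {U : Set (α × β)},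
      MeasurableSet U → Measurable fun x => m.rnDeriv ρ x * η x (Prod.mk x ⁻¹' U) :=
    fun _ _ _ _ hU => (Measure.measurable_rnDeriv _ _).mul (Kernel.measurable_kernel_prodMk_left hU)
  simp only [compProd_apply_eq_lintegral_rnDeriv_mul hμ _ hS,
    compProd_apply_eq_lintegral_rnDeriv_mul hμ _ hT,
    compProd_apply_eq_lintegral_rnDeriv_mul hν _ hS,
    compProd_apply_eq_lintegral_rnDeriv_mul hν _ hT,
    ← lintegral_const_mul c (hmeas ν _ hS), ← lintegral_const_mul c (hmeas ν _ hT)]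
  rw [← lintegral_add_left (hmeas μ κμ hS), ← lintegral_add_left (hmeas μ ημ hT)]
  exact lintegral_mono_ae (h.mono fun x hx => by simpa only [mul_assoc] using hx)

end Integration

theorem adaptive_profile_domination
    {Ω₁ Ω₂ : Type*} [MeasurableSpace Ω₁] [MeasurableSpace Ω₂]
    (P₁ Q₁ : Measure Ω₁) [IsProbabilityMeasure P₁] [IsProbabilityMeasure Q₁]
    (κP κQ : Kernel Ω₁ Ω₂) [IsMarkovKernel κP] [IsMarkovKernel κQ]
    (P₂ Q₂ : Measure Ω₂) [IsProbabilityMeasure P₂] [IsProbabilityMeasure Q₂]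
    (hdom : ∀ (ε : ℝ) (x : Ω₁), privProfile (κP x) (κQ x) ε ≤ privProfile P₂ Q₂ ε)
    (ε : ℝ) :
    privProfile (P₁ ⊗ₘ κP) (Q₁ ⊗ₘ κQ) ε ≤ privProfile (P₁.prod P₂) (Q₁.prod Q₂) ε := by
  refine privProfile_le _ _ ε fun S hS => ?_
  set ρ := P₁ + Q₁
  set C := ENNReal.ofReal (Real.exp ε)
  set T : Set (Ω₁ × Ω₂) := {z | z.2 ∈ npSet P₂ Q₂ (P₁.rnDeriv ρ z.1) (C * Q₁.rnDeriv ρ z.1)}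
  have hT : MeasurableSet T := measurableSet_setOf_mem_npSet P₂ Q₂
    (Measure.measurable_rnDeriv P₁ ρ) ((Measure.measurable_rnDeriv Q₁ ρ).const_mul C)
  have key := compProd_add_mul_compProd_le_of_ae
    (Measure.absolutelyContinuous_of_le (Measure.le_add_right le_rfl))
    (Measure.absolutelyContinuous_of_le (Measure.le_add_left le_rfl))
    (κμ := κP) (κν := κQ) (ημ := Kernel.const Ω₁ P₂) (ην := Kernel.const Ω₁ Q₂) C hS hT <| by
      filter_upwards [Measure.rnDeriv_lt_top P₁ ρ, Measure.rnDeriv_lt_top Q₁ ρ] with x hp hq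
      exact add_measure_npSet_le_of_privProfile_le (hdom · x) hp.ne (by finiteness)
        (measurable_prodMk_left hS)
  rw [Measure.compProd_const, Measure.compProd_const,
    ENNReal.add_le_add_iff_toReal_sub_le (by finiteness) (by finiteness) (by finiteness)
      (by finiteness)] at key
  calc _ ≤ (P₁.prod P₂).real T - Real.exp ε * (Q₁.prod Q₂).real T := by
        simpa only [ENNReal.toReal_mul, measureReal_def, C,
          ENNReal.toReal_ofReal (Real.exp_pos ε).le] using key
    _ ≤ _ := le_privProfile _ _ ε hT
end
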